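/- Let d ≥ 1, N ≥ 1, let K ⊂ ℝ^d be a finite set closed under negation, let G : ℝ^d → ℝ be even, and let Ŝ : ℝ^d → ℂ be conjugate-symmetric (Ŝ(−k) = conj(Ŝ(k))). Define the discrete potential energy U_E(X₁,…,X_N) = (1/2) Σ_{k∈K} G(k) |Ŝ(k)|² |Σ_{j=1}^N exp(−i⟨k,X_j⟩)|² and the discrete force on particle s, F_s(X) = Σ_{k∈K} (−i k) G(k) |Ŝ(k)|² exp(i⟨k,X_s⟩) Σ_{j=1}^N exp(−i⟨k,X_j⟩), which is a real vector in ℝ^d under these symmetry assumptions. Then U_E is a smooth function of the positions and for each s, the gradient of U_E with respect to X_s satisfies ∇_{X_s} U_E(X) = −F_s(X); that is, the PIF force is exactly the negative gradient of the discrete potential energy. -/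

import Mathlib

open scoped InnerProductSpace BigOperators

/-- The `ℓ`-th complex component of the PIF force on particle `s`:
`Σ_{k∈K} (−i k_ℓ) G(k) |Ŝ(k)|² exp(i⟨k,X_s⟩) Σ_j exp(−i⟨k,X_j⟩)`. -/
noncomputable def pifForceC {d N : ℕ} (K : Finset (EuclideanSpace ℝ (Fin d)))
    (G : EuclideanSpace ℝ (Fin d) → ℝ) (Shat : EuclideanSpace ℝ (Fin d) → ℂ)
    (X : Fin N → EuclideanSpace ℝ (Fin d)) (s : Fin N) (ℓ : Fin d) : ℂ :=
  ∑ k ∈ K, (-Complex.I * (k ℓ : ℂ)) * (G k : ℂ) * ((‖Shat k‖ : ℝ) : ℂ) ^ 2 *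
    Complex.exp (Complex.I * (⟪k, X s⟫_ℝ : ℂ)) *
    ∑ j, Complex.exp (-Complex.I * (⟪k, X j⟫_ℝ : ℂ))

/-- The PIF force on particle `s` as a real vector in `ℝ^d` (the real part of the
complex PIF force formula, which has vanishing imaginary part under the symmetry
assumptions on `K`, `G`, `Ŝ`). -/
noncomputable def pifForce {d N : ℕ} (K : Finset (EuclideanSpace ℝ (Fin d)))
    (G : EuclideanSpace ℝ (Fin d) → ℝ) (Shat : EuclideanSpace ℝ (Fin d) → ℂ)
    (X : Fin N → EuclideanSpace ℝ (Fin d)) (s : Fin N) : EuclideanSpace ℝ (Fin d) :=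
  (EuclideanSpace.equiv (Fin d) ℝ).symm fun ℓ => (pifForceC K G Shat X s ℓ).re

/-- The discrete PIF potential energy
`U_E(X) = (1/2) Σ_{k∈K} G(k) |Ŝ(k)|² |Σ_j exp(−i⟨k,X_j⟩)|²`. -/
noncomputable def pifPotentialEnergy {d N : ℕ} (K : Finset (EuclideanSpace ℝ (Fin d)))
    (G : EuclideanSpace ℝ (Fin d) → ℝ) (Shat : EuclideanSpace ℝ (Fin d) → ℂ)
    (X : Fin N → EuclideanSpace ℝ (Fin d)) : ℝ :=
  (1 / 2) * ∑ k ∈ K, G k * (‖Shat k‖) ^ 2 *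
    (‖∑ j, Complex.exp (-Complex.I * (⟪k, X j⟫_ℝ : ℂ))‖) ^ 2

/-- The kinetic energy `U_K(V) = (1/2) Σ_s ‖V_s‖²`. -/
noncomputable def kineticEnergy {d N : ℕ}
    (V : Fin N → EuclideanSpace ℝ (Fin d)) : ℝ :=
  (1 / 2) * ∑ s, ‖V s‖ ^ 2

private lemma exp_neg_I_ofReal (θ : ℝ) :
    Complex.exp (-Complex.I * (θ : ℂ)) =
      (Real.cos θ : ℂ) - (Real.sin θ : ℂ) * Complex.I := by
  have h : -Complex.I * (θ : ℂ) = ((-θ : ℝ) : ℂ) * Complex.I := by push_cast; ring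
  rw [h, Complex.exp_mul_I, ← Complex.ofReal_cos, ← Complex.ofReal_sin,
    Real.cos_neg, Real.sin_neg]
  push_cast; ring

private lemma exp_I_ofReal (θ : ℝ) :
    Complex.exp (Complex.I * (θ : ℂ)) =
      (Real.cos θ : ℂ) + (Real.sin θ : ℂ) * Complex.I := by
  rw [mul_comm, Complex.exp_mul_I, ← Complex.ofReal_cos, ← Complex.ofReal_sin]

private lemma sum_exp_re {d N : ℕ} (k : EuclideanSpace ℝ (Fin d))
    (X : Fin N → EuclideanSpace ℝ (Fin d)) :
    (∑ j, Complex.exp (-Complex.I * (⟪k, X j⟫_ℝ : ℂ))).re =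
      ∑ j, Real.cos ⟪k, X j⟫_ℝ := by
  rw [Complex.re_sum]
  exact Finset.sum_congr rfl fun j _ => by
    rw [exp_neg_I_ofReal]
    simp only [Complex.sub_re, Complex.mul_re, Complex.ofReal_re, Complex.ofReal_im,
      Complex.I_re, Complex.I_im]
    ring

private lemma sum_exp_im {d N : ℕ} (k : EuclideanSpace ℝ (Fin d))
    (X : Fin N → EuclideanSpace ℝ (Fin d)) :
    (∑ j, Complex.exp (-Complex.I * (⟪k, X j⟫_ℝ : ℂ))).im =
      -∑ j, Real.sin ⟪k, X j⟫_ℝ := by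
  rw [Complex.im_sum, ← Finset.sum_neg_distrib]
  exact Finset.sum_congr rfl fun j _ => by
    rw [exp_neg_I_ofReal]
    simp only [Complex.sub_im, Complex.mul_im, Complex.ofReal_re, Complex.ofReal_im,
      Complex.I_re, Complex.I_im]
    ring

private lemma pot_real {d N : ℕ} (K : Finset (EuclideanSpace ℝ (Fin d)))
    (G : EuclideanSpace ℝ (Fin d) → ℝ) (Shat : EuclideanSpace ℝ (Fin d) → ℂ)
    (X : Fin N → EuclideanSpace ℝ (Fin d)) :
    pifPotentialEnergy K G Shat X =
    (1 / 2) * ∑ k ∈ K, (G k * ‖Shat k‖ ^ 2) *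
      ((∑ j, Real.cos ⟪k, X j⟫_ℝ) ^ 2 + (∑ j, Real.sin ⟪k, X j⟫_ℝ) ^ 2) := by
  unfold pifPotentialEnergy
  congr 1
  refine Finset.sum_congr rfl fun k _ => ?_
  have h3 : (‖∑ j, Complex.exp (-Complex.I * (⟪k, X j⟫_ℝ : ℂ))‖) ^ 2 =
      (∑ j, Real.cos ⟪k, X j⟫_ℝ) ^ 2 + (∑ j, Real.sin ⟪k, X j⟫_ℝ) ^ 2 := by
    rw [Complex.sq_norm, Complex.normSq_apply, sum_exp_re k X, sum_exp_im k X]; ring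
  rw [h3]

/-- Gradient of the generic real trigonometric sum appearing in the potential. -/
private lemma grad_aux (d : ℕ) (K : Finset (EuclideanSpace ℝ (Fin d)))
    (c A B : EuclideanSpace ℝ (Fin d) → ℝ) (x : EuclideanSpace ℝ (Fin d)) :
    HasGradientAt (fun Y : EuclideanSpace ℝ (Fin d) =>
        (1/2 : ℝ) * ∑ k ∈ K, c k *
          ((Real.cos ⟪k, Y⟫_ℝ + A k) ^ 2 + (Real.sin ⟪k, Y⟫_ℝ + B k) ^ 2))
      (∑ k ∈ K, (c k * ((Real.sin ⟪k, x⟫_ℝ + B k) * Real.cos ⟪k, x⟫_ℝ -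
          (Real.cos ⟪k, x⟫_ℝ + A k) * Real.sin ⟪k, x⟫_ℝ)) • k) x := by
  rw [hasGradientAt_iff_hasFDerivAt]
  have hL : HasFDerivAt (fun Y : EuclideanSpace ℝ (Fin d) =>
      (1/2 : ℝ) * ∑ k ∈ K, c k *
        ((Real.cos ⟪k, Y⟫_ℝ + A k) ^ 2 + (Real.sin ⟪k, Y⟫_ℝ + B k) ^ 2))
      ((1/2 : ℝ) • ∑ k ∈ K, c k •
        (((Real.cos ⟪k, x⟫_ℝ + A k) • (-Real.sin ⟪k, x⟫_ℝ • (innerSL ℝ k)) +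
          (Real.cos ⟪k, x⟫_ℝ + A k) • (-Real.sin ⟪k, x⟫_ℝ • (innerSL ℝ k))) +
         ((Real.sin ⟪k, x⟫_ℝ + B k) • (Real.cos ⟪k, x⟫_ℝ • (innerSL ℝ k)) +
          (Real.sin ⟪k, x⟫_ℝ + B k) • (Real.cos ⟪k, x⟫_ℝ • (innerSL ℝ k))))) x := by
    have hsum : HasFDerivAt (fun Y : EuclideanSpace ℝ (Fin d) =>
        ∑ k ∈ K, c k *
          ((Real.cos ⟪k, Y⟫_ℝ + A k) ^ 2 + (Real.sin ⟪k, Y⟫_ℝ + B k) ^ 2))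
        (∑ k ∈ K, c k •
          (((Real.cos ⟪k, x⟫_ℝ + A k) • (-Real.sin ⟪k, x⟫_ℝ • (innerSL ℝ k)) +
            (Real.cos ⟪k, x⟫_ℝ + A k) • (-Real.sin ⟪k, x⟫_ℝ • (innerSL ℝ k))) +
           ((Real.sin ⟪k, x⟫_ℝ + B k) • (Real.cos ⟪k, x⟫_ℝ • (innerSL ℝ k)) +
            (Real.sin ⟪k, x⟫_ℝ + B k) • (Real.cos ⟪k, x⟫_ℝ • (innerSL ℝ k))))) x := by
      apply HasFDerivAt.fun_sum
      intro k _
      have h1 : HasFDerivAt (fun Y : EuclideanSpace ℝ (Fin d) => ⟪k, Y⟫_ℝ)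
          (innerSL ℝ k) x := (innerSL ℝ k).hasFDerivAt
      have hcos : HasFDerivAt (fun Y : EuclideanSpace ℝ (Fin d) => Real.cos ⟪k, Y⟫_ℝ + A k)
          (-Real.sin ⟪k, x⟫_ℝ • (innerSL ℝ k)) x :=
        ((Real.hasDerivAt_cos ⟪k, x⟫_ℝ).comp_hasFDerivAt x h1).add_const (A k)
      have hsin : HasFDerivAt (fun Y : EuclideanSpace ℝ (Fin d) => Real.sin ⟪k, Y⟫_ℝ + B k)
          (Real.cos ⟪k, x⟫_ℝ • (innerSL ℝ k)) x :=
        ((Real.hasDerivAt_sin ⟪k, x⟫_ℝ).comp_hasFDerivAt x h1).add_const (B k)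
      have := ((hcos.mul hcos).add (hsin.mul hsin)).const_mul (c k)
      simpa only [← pow_two, Pi.add_apply, Pi.pow_apply, Pi.mul_apply] using this
    simpa using hsum.const_mul (1/2 : ℝ)
  refine HasFDerivAt.congr_fderiv hL ?_
  ext w
  simp only [InnerProductSpace.toDual_apply_apply, sum_inner, real_inner_smul_left,
    ContinuousLinearMap.coe_smul', Pi.smul_apply, ContinuousLinearMap.coe_sum',
    Finset.sum_apply, ContinuousLinearMap.add_apply, innerSL_apply_apply, smul_eq_mul]
  rw [Finset.mul_sum]
  refine Finset.sum_congr rfl fun k _ => ?_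
  ring

private lemma grad_vec_eq {d N : ℕ} (K : Finset (EuclideanSpace ℝ (Fin d)))
    (G : EuclideanSpace ℝ (Fin d) → ℝ) (Shat : EuclideanSpace ℝ (Fin d) → ℂ)
    (X : Fin N → EuclideanSpace ℝ (Fin d)) (s : Fin N) :
    ∑ k ∈ K, ((G k * ‖Shat k‖ ^ 2) *
        ((∑ j, Real.sin ⟪k, X j⟫_ℝ) * Real.cos ⟪k, X s⟫_ℝ -
         (∑ j, Real.cos ⟪k, X j⟫_ℝ) * Real.sin ⟪k, X s⟫_ℝ)) • k =
      -pifForce K G Shat X s := by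
  apply PiLp.ext
  intro ℓ
  have hR : (-pifForce K G Shat X s) ℓ = -(pifForceC K G Shat X s ℓ).re := rfl
  rw [hR, pifForceC, Complex.re_sum, ← Finset.sum_neg_distrib]
  have hL : (∑ k ∈ K, ((G k * ‖Shat k‖ ^ 2) *
        ((∑ j, Real.sin ⟪k, X j⟫_ℝ) * Real.cos ⟪k, X s⟫_ℝ -
         (∑ j, Real.cos ⟪k, X j⟫_ℝ) * Real.sin ⟪k, X s⟫_ℝ)) • k) ℓ =
      ∑ k ∈ K, ((G k * ‖Shat k‖ ^ 2) *
        ((∑ j, Real.sin ⟪k, X j⟫_ℝ) * Real.cos ⟪k, X s⟫_ℝ -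
         (∑ j, Real.cos ⟪k, X j⟫_ℝ) * Real.sin ⟪k, X s⟫_ℝ)) * k ℓ :=
    by rw [WithLp.ofLp_sum, Finset.sum_apply]; rfl
  rw [hL]
  refine Finset.sum_congr rfl fun k _ => ?_
  rw [exp_I_ofReal]
  rw [show ((‖Shat k‖ : ℝ) : ℂ) ^ 2 = ((‖Shat k‖ ^ 2 : ℝ) : ℂ) by
    push_cast; ring]
  simp only [Complex.mul_re, Complex.mul_im, Complex.neg_re, Complex.neg_im,
    Complex.I_re, Complex.I_im, Complex.ofReal_re, Complex.ofReal_im,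
    Complex.add_re, Complex.add_im, sum_exp_re k X, sum_exp_im k X]
  ring

/-- **The PIF force is the negative gradient of the discrete potential energy.**
Under the symmetry assumptions, `U_E` is a smooth function of the positions and
`∇_{X_s} U_E(X) = −F_s(X)` for every configuration `X` and particle `s`. -/
theorem pifForce_eq_neg_gradient
    (d : ℕ) (hd : 1 ≤ d) (N : ℕ) (hN : 1 ≤ N)
    (K : Finset (EuclideanSpace ℝ (Fin d))) (hK : ∀ k ∈ K, -k ∈ K)
    (G : EuclideanSpace ℝ (Fin d) → ℝ) (hG : ∀ k, G (-k) = G k)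
    (Shat : EuclideanSpace ℝ (Fin d) → ℂ)
    (hShat : ∀ k, Shat (-k) = starRingEnd ℂ (Shat k)) :
    ContDiff ℝ (⊤ : ℕ∞) (fun X : Fin N → EuclideanSpace ℝ (Fin d) =>
        pifPotentialEnergy K G Shat X) ∧
    ∀ (X : Fin N → EuclideanSpace ℝ (Fin d)) (s : Fin N),
      gradient (fun Y => pifPotentialEnergy K G Shat (Function.update X s Y)) (X s) =
        -pifForce K G Shat X s := by
  classical
  constructor
  · -- smoothness
    have hrw : (fun X : Fin N → EuclideanSpace ℝ (Fin d) => pifPotentialEnergy K G Shat X) =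
        fun X : Fin N → EuclideanSpace ℝ (Fin d) =>
          (1 / 2 : ℝ) * ∑ k ∈ K, (G k * ‖Shat k‖ ^ 2) *
            ((∑ j, Real.cos ⟪k, X j⟫_ℝ) ^ 2 + (∑ j, Real.sin ⟪k, X j⟫_ℝ) ^ 2) :=
      funext fun X => pot_real K G Shat X
    rw [hrw]
    apply ContDiff.mul contDiff_const
    apply ContDiff.sum; intro k _
    apply ContDiff.mul contDiff_const
    have hXj : ∀ j : Fin N, ContDiff ℝ (⊤ : ℕ∞)
        (fun X : Fin N → EuclideanSpace ℝ (Fin d) => X j) := fun j =>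
      (ContinuousLinearMap.proj j :
        (Fin N → EuclideanSpace ℝ (Fin d)) →L[ℝ] EuclideanSpace ℝ (Fin d)).contDiff
    have hin : ∀ j : Fin N, ContDiff ℝ (⊤ : ℕ∞)
        (fun X : Fin N → EuclideanSpace ℝ (Fin d) => ⟪k, X j⟫_ℝ) := fun j =>
      ContDiff.inner ℝ contDiff_const (hXj j)
    apply ContDiff.add
    · apply ContDiff.pow
      apply ContDiff.sum; intro j _
      exact Real.contDiff_cos.comp (hin j)
    · apply ContDiff.pow
      apply ContDiff.sum; intro j _
      exact Real.contDiff_sin.comp (hin j)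
  · intro X s
    -- decompose sums over the updated configuration
    have hupd : ∀ (g : EuclideanSpace ℝ (Fin d) → ℝ) (Y : EuclideanSpace ℝ (Fin d)),
        ∑ j, g (Function.update X s Y j) =
          g Y + ∑ j ∈ Finset.univ \ {s}, g (X j) := by
      intro g Y
      have h1 : ∀ j, g (Function.update X s Y j) =
          Function.update (fun j => g (X j)) s (g Y) j := fun j =>
        Function.apply_update (fun _ w => g w) X s Y j
      simp_rw [h1]
      exact Finset.sum_update_of_mem (Finset.mem_univ s) _ _
    set A : EuclideanSpace ℝ (Fin d) → ℝ :=
      fun k => ∑ j ∈ Finset.univ \ {s}, Real.cos ⟪k, X j⟫_ℝ with hA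
    set B : EuclideanSpace ℝ (Fin d) → ℝ :=
      fun k => ∑ j ∈ Finset.univ \ {s}, Real.sin ⟪k, X j⟫_ℝ with hB
    have hfun : (fun Y => pifPotentialEnergy K G Shat (Function.update X s Y)) =
        fun Y : EuclideanSpace ℝ (Fin d) =>
          (1 / 2 : ℝ) * ∑ k ∈ K, (G k * ‖Shat k‖ ^ 2) *
            ((Real.cos ⟪k, Y⟫_ℝ + A k) ^ 2 + (Real.sin ⟪k, Y⟫_ℝ + B k) ^ 2) := by
      funext Y
      rw [pot_real]
      congr 1
      refine Finset.sum_congr rfl fun k _ => ?_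
      rw [hupd (fun w => Real.cos ⟪k, w⟫_ℝ) Y, hupd (fun w => Real.sin ⟪k, w⟫_ℝ) Y]
    have hgrad := grad_aux d K (fun k => G k * ‖Shat k‖ ^ 2) A B (X s)
    rw [hfun]
    rw [HasGradientAt.gradient hgrad]
    have hCk : ∀ k : EuclideanSpace ℝ (Fin d),
        Real.cos ⟪k, X s⟫_ℝ + A k = ∑ j, Real.cos ⟪k, X j⟫_ℝ := by
      intro k
      have := hupd (fun w => Real.cos ⟪k, w⟫_ℝ) (X s)
      rw [Function.update_eq_self] at this
      exact this.symm
    have hSk : ∀ k : EuclideanSpace ℝ (Fin d),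
        Real.sin ⟪k, X s⟫_ℝ + B k = ∑ j, Real.sin ⟪k, X j⟫_ℝ := by
      intro k
      have := hupd (fun w => Real.sin ⟪k, w⟫_ℝ) (X s)
      rw [Function.update_eq_self] at this
      exact this.symm
    rw [← grad_vec_eq K G Shat X s]
    refine Finset.sum_congr rfl fun k _ => ?_
    rw [show Real.sin ⟪k, X s⟫_ℝ + B k = ∑ j, Real.sin ⟪k, X j⟫_ℝ from hSk k,
      show Real.cos ⟪k, X s⟫_ℝ + A k = ∑ j, Real.cos ⟪k, X j⟫_ℝ from hCk k]
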